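/- In a spanning tree labeled by the SkipTree procedure (a recursion where LabelFirst(i) labels node i with the next unused integer and then calls LabelLast on each child, and LabelLast(i) calls LabelFirst on each child and then labels node i), for every i ∈ {0,...,n−1}, the unique tree path from the node labeled i to the node labeled i+1 (mod n) has length at most 3. -/

import Mathlib

/-! Relative to the root of the subtree being processed, `LabelFirst` starts at that root and
ends at depth at most 1, while `LabelLast` starts at depth at most 1 and ends at the root.
Where the sequences of two consecutive siblings meet, one side is a sibling itself and the
other lies at depth at most 1 below the other sibling, so the path through their parent has
length at most 3. The cyclic step from the last label back to the root has length at most 1. -/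

/-- A finite rooted tree with ordered children. -/
inductive RTree : Type where
  | node : List RTree → RTree

namespace RTree

mutual
  /-- `LabelFirst`: the order of labeling starting from labeling the given node first and
  then processing each child by `LabelLast`.  Nodes are recorded by their address (the
  list of child indices from this node). -/
  def firstSeq : RTree → List (List ℕ)
    | node cs => [] :: lastSeqs cs 0
  /-- `LabelLast`: process each child by `LabelFirst`, then label the given node. -/
  def lastSeq : RTree → List (List ℕ)
    | node cs => firstSeqs cs 0 ++ [[]]
  def lastSeqs : List RTree → ℕ → List (List ℕ)
    | [], _ => []
    | c :: cs, k => (lastSeq c).map (k :: ·) ++ lastSeqs cs (k + 1)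
  def firstSeqs : List RTree → ℕ → List (List ℕ)
    | [], _ => []
    | c :: cs, k => (firstSeq c).map (k :: ·) ++ firstSeqs cs (k + 1)
end

end RTree

/-- Length of the longest common prefix of two node addresses. -/
def commonPrefixLen : List ℕ → List ℕ → ℕ
  | a :: as, b :: bs => if a = b then commonPrefixLen as bs + 1 else 0
  | _, _ => 0

/-- The tree distance (number of edges on the unique tree path) between two nodes of a
rooted tree, given by their addresses. -/
def treeDist (p q : List ℕ) : ℕ :=
  (p.length - commonPrefixLen p q) + (q.length - commonPrefixLen p q)

theorem List.IsChain.rel_getElem_add_one_mod {α : Type*} {R : α → α → Prop} {l : List α}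
    (hl : l.IsChain R) (hwrap : ∀ a ∈ l.getLast?, ∀ b ∈ l.head?, R a b) (i : ℕ)
    (hi : i < l.length) : R l[i] (l[(i + 1) % l.length]'(Nat.mod_lt _ (by omega))) := by
  rcases Nat.lt_or_ge (i + 1) l.length with hlt | hge
  · simp only [Nat.mod_eq_of_lt hlt]
    exact List.isChain_iff_getElem.1 hl i hlt
  · have hlast : i + 1 = l.length := by omega
    simp only [hlast, Nat.mod_self]
    apply hwrap
    · simp [List.getLast?_eq_getElem?, ← hlast]
    · simp [List.head?_eq_getElem?]

theorem treeDist_le_length_add_length (p q : List ℕ) : treeDist p q ≤ p.length + q.length :=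
  Nat.add_le_add (Nat.sub_le _ _) (Nat.sub_le _ _)

@[simp]
theorem treeDist_cons_cons (k : ℕ) (p q : List ℕ) : treeDist (k :: p) (k :: q) = treeDist p q := by
  simp [treeDist, commonPrefixLen]

theorem List.isChain_treeDist_le_append {l₁ l₂ : List (List ℕ)} {d : ℕ}
    (h₁ : l₁.IsChain (treeDist · · ≤ d)) (h₂ : l₂.IsChain (treeDist · · ≤ d))
    (hjoin : ∀ p ∈ l₁.getLast?, ∀ q ∈ l₂.head?, p.length + q.length ≤ d) :
    (l₁ ++ l₂).IsChain (treeDist · · ≤ d) :=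
  List.isChain_append.2 ⟨h₁, h₂, fun p hp q hq =>
    (treeDist_le_length_add_length p q).trans (hjoin p hp q hq)⟩

theorem List.IsChain.treeDist_map_cons {l : List (List ℕ)} {d : ℕ} (k : ℕ)
    (h : l.IsChain (treeDist · · ≤ d)) : (l.map (k :: ·)).IsChain (treeDist · · ≤ d) :=
  List.isChain_map _ |>.2 (by simpa using h)

namespace RTree

@[simp]
theorem head?_firstSeq (t : RTree) : (firstSeq t).head? = some [] := by
  cases t; rfl

@[simp]
theorem getLast?_lastSeq (t : RTree) : (lastSeq t).getLast? = some [] := by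
  cases t; simp [lastSeq]

@[simp]
theorem lastSeq_ne_nil (t : RTree) : lastSeq t ≠ [] := by
  cases t; simp [lastSeq]

theorem length_le_of_mem_head?_firstSeqs {cs : List RTree} {k : ℕ} {p : List ℕ}
    (hp : p ∈ (firstSeqs cs k).head?) : p.length ≤ 1 := by
  cases cs with
  | nil => simp [firstSeqs] at hp
  | cons c cs =>
    simp only [firstSeqs, List.head?_append, List.head?_map, head?_firstSeq, Option.map_some,
      Option.some_or, Option.mem_def, Option.some.injEq] at hp
    simp [← hp]

theorem length_le_of_mem_head?_lastSeq {t : RTree} {p : List ℕ}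
    (hp : p ∈ (lastSeq t).head?) : p.length ≤ 1 := by
  obtain ⟨cs⟩ := t
  simp only [lastSeq, List.head?_append, List.head?_cons, Option.mem_def, Option.or_eq_some_iff,
    Option.some.injEq] at hp
  rcases hp with hp | ⟨-, rfl⟩
  · exact length_le_of_mem_head?_firstSeqs hp
  · simp

theorem length_le_of_mem_head?_lastSeqs {cs : List RTree} {k : ℕ} {p : List ℕ}
    (hp : p ∈ (lastSeqs cs k).head?) : p.length ≤ 2 := by
  cases cs with
  | nil => simp [lastSeqs] at hp
  | cons c cs =>
    simp only [lastSeqs, List.head?_append, List.head?_map, Option.mem_def,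
      Option.or_eq_some_iff, Option.map_eq_some_iff] at hp
    rcases hp with ⟨q, hq, rfl⟩ | ⟨hnil, -⟩
    · simpa using length_le_of_mem_head?_lastSeq hq
    · simp at hnil

theorem length_le_of_mem_getLast?_lastSeqs {cs : List RTree} {k : ℕ} {p : List ℕ}
    (hp : p ∈ (lastSeqs cs k).getLast?) : p.length ≤ 1 := by
  induction cs generalizing k with
  | nil => simp [lastSeqs] at hp
  | cons c cs ih =>
    simp only [lastSeqs, List.getLast?_append, List.getLast?_map, getLast?_lastSeq,
      Option.mem_def, Option.or_eq_some_iff] at hp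
    rcases hp with hp | ⟨-, hp⟩
    · exact ih hp
    · simp [← Option.some.inj hp]

theorem length_le_of_mem_getLast?_firstSeq {t : RTree} {p : List ℕ}
    (hp : p ∈ (firstSeq t).getLast?) : p.length ≤ 1 := by
  obtain ⟨cs⟩ := t
  simp only [firstSeq, List.getLast?_cons, Option.mem_def, Option.some.injEq,
    Option.getD_eq_iff] at hp
  rcases hp with hp | ⟨-, rfl⟩
  · exact length_le_of_mem_getLast?_lastSeqs hp
  · simp

theorem length_le_of_mem_getLast?_firstSeqs {cs : List RTree} {k : ℕ} {p : List ℕ}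
    (hp : p ∈ (firstSeqs cs k).getLast?) : p.length ≤ 2 := by
  induction cs generalizing k with
  | nil => simp [firstSeqs] at hp
  | cons c cs ih =>
    simp only [firstSeqs, List.getLast?_append, List.getLast?_map,
      Option.mem_def, Option.or_eq_some_iff, Option.map_eq_some_iff] at hp
    rcases hp with hp | ⟨-, q, hq, rfl⟩
    · exact ih hp
    · simpa using length_le_of_mem_getLast?_firstSeq hq

mutual

theorem isChain_firstSeq : ∀ t : RTree, (firstSeq t).IsChain (treeDist · · ≤ 3)
  | node cs => List.isChain_treeDist_le_append (l₁ := [[]]) (by simp) (isChain_lastSeqs cs 0)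
      fun p hp q hq => by
        simp only [List.getLast?_singleton, Option.mem_def, Option.some.injEq] at hp
        have := length_le_of_mem_head?_lastSeqs hq
        simp only [← hp, List.length_nil]
        omega

theorem isChain_lastSeq : ∀ t : RTree, (lastSeq t).IsChain (treeDist · · ≤ 3)
  | node cs => List.isChain_treeDist_le_append (isChain_firstSeqs cs 0) (by simp)
      fun p hp q hq => by
        simp only [List.head?_singleton, Option.mem_def, Option.some.injEq] at hq
        have := length_le_of_mem_getLast?_firstSeqs hp
        simp only [← hq, List.length_nil]
        omega

theorem isChain_lastSeqs : ∀ (cs : List RTree) (k : ℕ), (lastSeqs cs k).IsChain (treeDist · · ≤ 3)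
  | [], _ => by simp [lastSeqs]
  | c :: cs, k => List.isChain_treeDist_le_append
      ((isChain_lastSeq c).treeDist_map_cons k) (isChain_lastSeqs cs (k + 1))
      fun p hp q hq => by
        simp only [List.getLast?_map, getLast?_lastSeq, Option.map_some, Option.mem_def,
          Option.some.injEq] at hp
        have := length_le_of_mem_head?_lastSeqs hq
        simp only [← hp, List.length_singleton]
        omega

theorem isChain_firstSeqs : ∀ (cs : List RTree) (k : ℕ), (firstSeqs cs k).IsChain (treeDist · · ≤ 3)
  | [], _ => by simp [firstSeqs]
  | c :: cs, k => List.isChain_treeDist_le_append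
      ((isChain_firstSeq c).treeDist_map_cons k) (isChain_firstSeqs cs (k + 1))
      fun p hp q hq => by
        simp only [List.getLast?_map, Option.mem_def, Option.map_eq_some_iff] at hp
        obtain ⟨r, hr, rfl⟩ := hp
        have := length_le_of_mem_getLast?_firstSeq hr
        have := length_le_of_mem_head?_firstSeqs hq
        simp only [List.length_cons]
        omega

end

end RTree

/-- In the SkipTree labeling of a rooted tree on `n > 1` nodes (root
processed by `LabelFirst`), for every `i` the tree path from the node labeled `i` to the
node labeled `i + 1 (mod n)` has length at most `3`. -/
theorem skipTree_path_length_le_three (t : RTree)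
    (h : 1 < (RTree.firstSeq t).length) (i : Fin (RTree.firstSeq t).length) :
    treeDist ((RTree.firstSeq t).get i)
      ((RTree.firstSeq t).get
        ⟨((i : ℕ) + 1) % (RTree.firstSeq t).length,
          Nat.mod_lt _ (Nat.lt_of_le_of_lt (Nat.zero_le _) h)⟩) ≤ 3 := by
  refine (RTree.isChain_firstSeq t).rel_getElem_add_one_mod (fun p hp q hq => ?_) i i.2
  obtain rfl : q = [] := by simpa using hq.symm
  calc treeDist p [] ≤ p.length + 0 := treeDist_le_length_add_length p []
    _ ≤ 3 := by have := RTree.length_le_of_mem_getLast?_firstSeq hp; omega
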